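/- arXiv:2512.01014 — 3 statements merged into one kernel-verified Lean document; each statement's English description precedes it below -/
import Mathlib

section
/- Let N be a normal subgroup of a group G. The two constructions Q ↦ (Q ×^N G, canonical section) and (P, s) ↦ (fiber of P → P/N over s) are mutually inverse: for any right N-torsor Q, the fiber of Q ×^N G → (Q ×^N G)/N over the canonical section is N-equivariantly isomorphic to Q; and for any right G-torsor P with section s ∈ P/N, the contracted product (fiber over s) ×^N G is G-equivariantly isomorphic to P compatibly with sections. -/
section

variable {G : Type*} [Group G] (N : Subgroup G)

/-- The relation presenting the contracted product `Q ×^N G`: `(q,g) ∼ (q·n, n⁻¹g)`. -/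
def cpRel {Q : Type*} (qact : Q → N → Q) : (Q × G) → (Q × G) → Prop :=
  fun a b => ∃ n : N, b.1 = qact a.1 n ∧ b.2 = (n : G)⁻¹ * a.2

/-- The relation presenting the double quotient `(Q ×^N G)/N`:
the contracted-product relation together with the right `N`-action `(q,g) ∼ (q, g·n)`. -/
def cpModNRel {Q : Type*} (qact : Q → N → Q) : (Q × G) → (Q × G) → Prop :=
  fun a b => cpRel N qact a b ∨ ∃ n : N, b.1 = a.1 ∧ b.2 = a.2 * (n : G)

/-- The projection `Q ×^N G → (Q ×^N G)/N`. -/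
def cpModN {Q : Type*} (qact : Q → N → Q) :
    Quot (cpRel N qact) → Quot (cpModNRel N qact) :=
  Quot.lift (Quot.mk (cpModNRel N qact)) (fun _ _ h => Quot.sound (Or.inl h))

/-- The `N`-orbit relation on a right `G`-set `P`: `p ∼ p·n`. -/
def orbitRelN {P : Type*} (pact : P → G → P) : P → P → Prop :=
  fun a b => ∃ n : N, b = pact a (n : G)

/-- The relation presenting `(fiber over s) ×^N G`, where the fiber of `P → P/N` over
`s` is realized as a subtype of `P`. -/
def fibRel {P : Type*} (pact : P → G → P) (s : Quot (orbitRelN N pact)) :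
    ({p : P // Quot.mk (orbitRelN N pact) p = s} × G) →
      ({p : P // Quot.mk (orbitRelN N pact) p = s} × G) → Prop :=
  fun a b => ∃ n : N, (b.1 : P) = pact (a.1 : P) (n : G) ∧ b.2 = (n : G)⁻¹ * a.2

end

theorem stmt6 {G : Type*} [Group G] (N : Subgroup G) [N.Normal]
    -- Q : a right N-torsor
    (Q : Type*) (qact : Q → N → Q)
    (hq_one : ∀ q, qact q 1 = q)
    (hq_mul : ∀ q (n m : N), qact (qact q n) m = qact q (n * m))
    (hQne : Nonempty Q) (hQtors : ∀ q q' : Q, ∃! n : N, qact q n = q')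
    -- P : a right G-torsor with a section s ∈ P/N
    (P : Type*) (pact : P → G → P)
    (hp_one : ∀ p, pact p 1 = p)
    (hp_mul : ∀ p (g h : G), pact (pact p g) h = pact p (g * h))
    (hPne : Nonempty P) (hPtors : ∀ p p' : P, ∃! g : G, pact p g = p')
    (s : Quot (orbitRelN N pact)) :
    -- (a) the fiber of Q ×^N G → (Q ×^N G)/N over the canonical section is
    -- N-equivariantly isomorphic to Q via q ↦ [(q,1)]
    (∀ q₀ : Q,
      (∀ q : Q, cpModN N qact (Quot.mk (cpRel N qact) (q, (1 : G))) =
        Quot.mk (cpModNRel N qact) (q₀, (1 : G))) ∧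
      Set.BijOn (fun q : Q => Quot.mk (cpRel N qact) (q, (1 : G))) Set.univ
        {r : Quot (cpRel N qact) |
          cpModN N qact r = Quot.mk (cpModNRel N qact) (q₀, (1 : G))} ∧
      (∀ (q : Q) (n : N),
        Quot.mk (cpRel N qact) (qact q n, (1 : G)) = Quot.mk (cpRel N qact) (q, (n : G)))) ∧
    -- (b) the contracted product (fiber over s) ×^N G is G-equivariantly isomorphic to P,
    -- compatibly with the sections
    (∃ Φ : Quot (fibRel N pact s) → P,
      (∀ (p : {p : P // Quot.mk (orbitRelN N pact) p = s}) (g : G),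
        Φ (Quot.mk (fibRel N pact s) (p, g)) = pact (p : P) g) ∧
      Function.Bijective Φ ∧
      (∀ (a : {p : P // Quot.mk (orbitRelN N pact) p = s} × G) (g' : G),
        Φ (Quot.mk (fibRel N pact s) (a.1, a.2 * g')) =
          pact (Φ (Quot.mk (fibRel N pact s) a)) g') ∧
      (∀ p : {p : P // Quot.mk (orbitRelN N pact) p = s},
        Quot.mk (orbitRelN N pact) (Φ (Quot.mk (fibRel N pact s) (p, (1 : G)))) = s)) := by
  classical
  constructor
  · -- part (a)
    intro q₀
    set nu : Q → N := fun q => (hQtors q₀ q).exists.choose with hnu_def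
    have hnu : ∀ q : Q, qact q₀ (nu q) = q := fun q => (hQtors q₀ q).exists.choose_spec
    have nu_one : nu q₀ = 1 := (hQtors q₀ q₀).unique (hnu q₀) (hq_one q₀)
    have nu_mul : ∀ q (n : N), nu (qact q n) = nu q * n := by
      intro q n
      refine (hQtors q₀ (qact q n)).unique (hnu _) ?_
      rw [← hq_mul, hnu q]
    have nu_inj : Function.Injective nu := by
      intro a b h
      rw [← hnu a, ← hnu b, h]
    have hφ : ∀ a b, cpRel N qact a b →
        ((nu a.1 : G) * a.2) = ((nu b.1 : G) * b.2) := by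
      rintro a b ⟨n, h1, h2⟩
      rw [h1, h2, nu_mul]
      push_cast
      group
    have hΨ : ∀ a b, cpModNRel N qact a b →
        (QuotientGroup.mk ((nu a.1 : G) * a.2) : G ⧸ N) =
          QuotientGroup.mk ((nu b.1 : G) * b.2) := by
      rintro a b (h | ⟨n, h1, h2⟩)
      · rw [hφ a b h]
      · rw [h1, h2, QuotientGroup.eq]
        have he : ((nu a.1 : G) * a.2)⁻¹ * ((nu a.1 : G) * (a.2 * (n : G))) = (n : G) := by group
        rw [he]; exact n.2
    have key : ∀ q : Q, Quot.mk (cpModNRel N qact) (q, (1:G)) =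
        Quot.mk (cpModNRel N qact) (q₀, (1:G)) := by
      intro q
      have step1 : Quot.mk (cpModNRel N qact) (q, (1:G)) =
          Quot.mk (cpModNRel N qact) (q₀, ((nu q : G))) := by
        apply Quot.sound
        refine Or.inl ⟨(nu q)⁻¹, ?_, by simp⟩
        show q₀ = qact q ((nu q)⁻¹)
        have hq' : qact (qact q₀ (nu q)) ((nu q)⁻¹) = q₀ := by
          rw [hq_mul, mul_inv_cancel, hq_one]
        rw [hnu q] at hq'
        exact hq'.symm
      have step2 : Quot.mk (cpModNRel N qact) (q₀, ((nu q : G))) =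
          Quot.mk (cpModNRel N qact) (q₀, (1:G)) := by
        apply Quot.sound
        exact Or.inr ⟨(nu q)⁻¹, rfl, by simp⟩
      exact step1.trans step2
    refine ⟨key, ⟨?_, ?_, ?_⟩, ?_⟩
    · -- MapsTo
      intro q _
      exact key q
    · -- InjOn
      intro q _ q' _ h
      have h2 : (nu q : G) * 1 = (nu q' : G) * 1 :=
        congrArg (Quot.lift (fun a : Q × G => (nu a.1 : G) * a.2) hφ) h
      simp only [mul_one] at h2
      exact nu_inj (Subtype.coe_injective h2)
    · -- SurjOn
      intro r hr
      obtain ⟨⟨q, g⟩, rfl⟩ := Quot.exists_rep r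
      have h3 : (QuotientGroup.mk ((nu q : G) * g) : G ⧸ N) =
          QuotientGroup.mk ((nu q₀ : G) * 1) :=
        congrArg (Quot.lift (fun a : Q × G =>
          (QuotientGroup.mk ((nu a.1 : G) * a.2) : G ⧸ N)) hΨ) hr
      rw [nu_one] at h3
      have hmem : (nu q : G) * g ∈ N := by
        have h4 := QuotientGroup.eq.mp h3.symm
        simpa using h4
      have hg : g ∈ N := by
        have := N.mul_mem (N.inv_mem (nu q).2) hmem
        simpa [mul_assoc] using this
      refine ⟨qact q ⟨g, hg⟩, Set.mem_univ _, ?_⟩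
      exact (Quot.sound ⟨⟨g, hg⟩, rfl, by simp⟩).symm
    · -- N-equivariance
      intro q n
      exact (Quot.sound ⟨n, rfl, by simp⟩).symm
  · -- part (b)
    obtain ⟨p₀, hp₀⟩ := Quot.exists_rep s
    set ga : P → G := fun p => (hPtors p₀ p).exists.choose with hga_def
    have hga : ∀ p : P, pact p₀ (ga p) = p := fun p => (hPtors p₀ p).exists.choose_spec
    have hΦ : ∀ a b, fibRel N pact s a b →
        pact (a.1 : P) a.2 = pact (b.1 : P) b.2 := by
      rintro a b ⟨n, h1, h2⟩
      rw [h1, h2, hp_mul, mul_inv_cancel_left]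
    have hχ : ∀ a b : P, orbitRelN N pact a b →
        (QuotientGroup.mk (ga a) : G ⧸ N) = QuotientGroup.mk (ga b) := by
      rintro a b ⟨n, rfl⟩
      have : ga (pact a (n : G)) = ga a * (n : G) := by
        refine (hPtors p₀ (pact a (n : G))).unique (hga _) ?_
        rw [← hp_mul, hga a]
      rw [this, QuotientGroup.eq]
      have he : (ga a)⁻¹ * (ga a * (n : G)) = (n : G) := by group
      rw [he]; exact n.2
    refine ⟨Quot.lift (fun a => pact (a.1 : P) a.2) hΦ, fun p g => rfl, ⟨?_, ?_⟩,
      fun a g' => (hp_mul _ _ _).symm, fun p => ?_⟩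
    · -- injective
      intro x y h
      obtain ⟨⟨p, g⟩, rfl⟩ := Quot.exists_rep x
      obtain ⟨⟨p', g'⟩, rfl⟩ := Quot.exists_rep y
      have h' : pact (p : P) g = pact (p' : P) g' := h
      have hpp' : (QuotientGroup.mk (ga (p : P)) : G ⧸ N) = QuotientGroup.mk (ga (p' : P)) :=
        congrArg (Quot.lift (fun p : P => (QuotientGroup.mk (ga p) : G ⧸ N)) hχ)
          (p.2.trans p'.2.symm)
      have hnmem : (ga (p : P))⁻¹ * ga (p' : P) ∈ N := QuotientGroup.eq.mp hpp'
      set n : N := ⟨(ga (p : P))⁻¹ * ga (p' : P), hnmem⟩ with hn_def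
      have h5 : (p' : P) = pact (p : P) (n : G) := by
        show (p' : P) = pact (p : P) ((ga (p : P))⁻¹ * ga (p' : P))
        have hq' : pact (pact p₀ (ga (p : P))) ((ga (p : P))⁻¹ * ga (p' : P)) = (p' : P) := by
          rw [hp_mul, mul_inv_cancel_left, hga]
        rw [hga (p : P)] at hq'
        exact hq'.symm
      have h6 : (n : G) * g' = g := by
        refine (hPtors (p : P) (pact (p : P) g)).unique ?_ rfl
        rw [← hp_mul, ← h5]
        exact h'.symm
      apply Quot.sound
      exact ⟨n, h5, by rw [← h6]; group⟩
    · -- surjective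
      intro p'
      exact ⟨Quot.mk _ (⟨p₀, hp₀⟩, ga p'), hga p'⟩
    · -- section compatibility
      show Quot.mk (orbitRelN N pact) (pact (p : P) 1) = s
      rw [hp_one]
      exact p.2
end

section
/- Let G be a group acting weakly on a groupoid X (a weak right action given by functor μ: X × G → X with natural isomorphisms α and a satisfying the coherence axioms). Then composition in the transformation groupoid ⌊X/G⌋, defined by (δ, h) ∘ (γ, g) = (α_{h,g}^z ∘ (δ·g) ∘ γ, hg) for γ: x → y·g and δ: y → z·h, is associative, and (a^x, e) is a two-sided identity at each object x. -/
open CategoryTheory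

/-!
Associativity is the coherence axiom `hassoc`, once `δ·g` has been slid past `α` by naturality
of `α`; the unit laws are `hunitl` and `hunitr`, the latter once `γ` has been slid past `a` by
naturality of `a`. The two sides of each law lie over group elements that are only propositionally
equal (`(kh)g = k(hg)`, `g·e = g`, `e·g = g`), and the discrepancy is absorbed by an `eqToHom`.
-/

/-- Composition in the transformation groupoid `⌊X/G⌋` of a weak right action:
for `f = (γ, g) : x → y` (with `γ : x ⟶ y·g`) and `f' = (δ, h) : y → z`, the composite
is `(α_{h,g}^z ∘ (δ·g) ∘ γ, hg)`. -/
def tcomp {C : Type*} [Groupoid C] {G : Type*} [Group G]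
    (act : G → C ⥤ C) (α : ∀ g h : G, act g ⋙ act h ≅ act (g * h))
    {x y z : C} (f : Σ g : G, x ⟶ (act g).obj y) (f' : Σ h : G, y ⟶ (act h).obj z) :
    Σ k : G, x ⟶ (act k).obj z :=
  ⟨f'.1 * f.1, f.2 ≫ (act f.1).map f'.2 ≫ (α f'.1 f.1).hom.app z⟩

lemma Sigma.mk_eq_mk_of_comp_eqToHom {C : Type*} [Category C] {ι : Type*} {F : ι → C} {x : C}
    {i j : ι} (p : i = j) {m : x ⟶ F i} {m' : x ⟶ F j}
    (h : m ≫ eqToHom (congrArg F p) = m') :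
    (⟨i, m⟩ : Σ k, x ⟶ F k) = ⟨j, m'⟩ := by
  subst p
  simpa using h

section TransformationGroupoid
variable {C : Type*} [Groupoid C] {G : Type*} [Group G]
  (act : G → C ⥤ C) (α : ∀ g h : G, act g ⋙ act h ≅ act (g * h))

theorem tcomp_assoc
    (hassoc : ∀ (g h k : G) (x : C),
      (act k).map ((α g h).hom.app x) ≫ (α (g * h) k).hom.app x ≫
          eqToHom (by rw [mul_assoc]) =
        (α h k).hom.app ((act g).obj x) ≫ (α g (h * k)).hom.app x)
    {x y z w : C} (f : Σ g : G, x ⟶ (act g).obj y) (f' : Σ g : G, y ⟶ (act g).obj z)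
    (f'' : Σ g : G, z ⟶ (act g).obj w) :
    tcomp act α (tcomp act α f f') f'' = tcomp act α f (tcomp act α f' f'') := by
  refine (Sigma.mk_eq_mk_of_comp_eqToHom (F := fun k => (act k).obj w) (mul_assoc _ _ _) ?_).symm
  simp only [tcomp, Functor.map_comp, Category.assoc, hassoc]
  exact congrArg _ (congrArg _ ((α f'.1 f.1).hom.naturality_assoc f''.2 _))

theorem unit_tcomp (a : 𝟭 C ≅ act 1)
    (hunitr : ∀ (g : G) (x : C),
      a.hom.app ((act g).obj x) ≫ (α g 1).hom.app x ≫ eqToHom (by rw [mul_one]) =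
        𝟙 ((act g).obj x))
    {x y : C} (f : Σ g : G, x ⟶ (act g).obj y) :
    tcomp act α ⟨1, a.hom.app x⟩ f = f := by
  refine Sigma.mk_eq_mk_of_comp_eqToHom (F := fun k => (act k).obj y) (mul_one f.1) ?_
  simp only [Category.assoc]
  rw [← a.hom.naturality_assoc, hunitr]
  exact Category.comp_id f.2

theorem tcomp_unit (a : 𝟭 C ≅ act 1)
    (hunitl : ∀ (g : G) (x : C),
      (act g).map (a.hom.app x) ≫ (α 1 g).hom.app x ≫ eqToHom (by rw [one_mul]) =
        𝟙 ((act g).obj x))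
    {x y : C} (f : Σ g : G, x ⟶ (act g).obj y) :
    tcomp act α f ⟨1, a.hom.app y⟩ = f := by
  refine Sigma.mk_eq_mk_of_comp_eqToHom (F := fun k => (act k).obj y) (one_mul f.1) ?_
  simp only [Category.assoc, hunitl, Category.comp_id]
end TransformationGroupoid

theorem stmt14 {C : Type*} [Groupoid C] {G : Type*} [Group G]
    -- a weak right action of G on C
    (act : G → C ⥤ C)
    (α : ∀ g h : G, act g ⋙ act h ≅ act (g * h))
    (a : 𝟭 C ≅ act 1)
    (hassoc : ∀ (g h k : G) (x : C),
      (act k).map ((α g h).hom.app x) ≫ (α (g * h) k).hom.app x ≫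
          eqToHom (by rw [mul_assoc]) =
        (α h k).hom.app ((act g).obj x) ≫ (α g (h * k)).hom.app x)
    (hunitl : ∀ (g : G) (x : C),
      (act g).map (a.hom.app x) ≫ (α 1 g).hom.app x ≫ eqToHom (by rw [one_mul]) =
        𝟙 ((act g).obj x))
    (hunitr : ∀ (g : G) (x : C),
      a.hom.app ((act g).obj x) ≫ (α g 1).hom.app x ≫ eqToHom (by rw [mul_one]) =
        𝟙 ((act g).obj x)) :
    -- composition in the transformation groupoid is associative...
    (∀ (x y z w : C) (f : Σ g : G, x ⟶ (act g).obj y) (f' : Σ g : G, y ⟶ (act g).obj z)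
        (f'' : Σ g : G, z ⟶ (act g).obj w),
      tcomp act α (tcomp act α f f') f'' = tcomp act α f (tcomp act α f' f'')) ∧
    -- ...and (aˣ, e) is a two-sided identity at each object x
    (∀ (x y : C) (f : Σ g : G, x ⟶ (act g).obj y),
      tcomp act α (⟨1, a.hom.app x⟩ : Σ g : G, x ⟶ (act g).obj x) f = f ∧
      tcomp act α f (⟨1, a.hom.app y⟩ : Σ g : G, y ⟶ (act g).obj y) = f) :=
  ⟨fun _ _ _ _ f f' f'' => tcomp_assoc act α hassoc f f' f'',
    fun _ _ f => ⟨unit_tcomp act α a hunitr f, tcomp_unit act α a hunitl f⟩⟩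
end

section
/- Let X and Y be groupoids with weak right G-actions and let (F, σ), (H, τ): X → Y be G-equivariant functors with a G-equivariant natural transformation Λ: F ⇒ H (satisfying τ_g^x ∘ (Λ^x · g) = Λ^{x·g} ∘ σ_g^x). Then the assignment ⌊Λ⌋^x = (b^{H(x)} ∘ Λ^x, e) defines a natural transformation ⌊F⌋ ⇒ ⌊H⌋ between the induced functors on transformation groupoids ⌊X/G⌋ → ⌊Y/G⌋. -/
open CategoryTheory

lemma sigma_hom_ext {C : Type*} [Groupoid C] {G : Type*} [Group G]
    (act : G → C ⥤ C) {x z : C} {k k' m : G}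
    (h : k = m) (h' : k' = m) {f : x ⟶ (act k).obj z} {f' : x ⟶ (act k').obj z}
    (hf : f ≫ eqToHom (by rw [h]) = f' ≫ eqToHom (by rw [h'])) :
    (⟨k, f⟩ : Σ g : G, x ⟶ (act g).obj z) = ⟨k', f'⟩ := by
  subst h h'
  simpa using hf

theorem stmt15 {X Y : Type*} [Groupoid X] [Groupoid Y] {G : Type*} [Group G]
    -- weak right action (μ, α, a) on X
    (actX : G → X ⥤ X)
    (αX : ∀ g h : G, actX g ⋙ actX h ≅ actX (g * h))
    (aX : 𝟭 X ≅ actX 1)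
    (hXassoc : ∀ (g h k : G) (x : X),
      (actX k).map ((αX g h).hom.app x) ≫ (αX (g * h) k).hom.app x ≫
          eqToHom (by rw [mul_assoc]) =
        (αX h k).hom.app ((actX g).obj x) ≫ (αX g (h * k)).hom.app x)
    (hXunitl : ∀ (g : G) (x : X),
      (actX g).map (aX.hom.app x) ≫ (αX 1 g).hom.app x ≫ eqToHom (by rw [one_mul]) =
        𝟙 ((actX g).obj x))
    (hXunitr : ∀ (g : G) (x : X),
      aX.hom.app ((actX g).obj x) ≫ (αX g 1).hom.app x ≫ eqToHom (by rw [mul_one]) =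
        𝟙 ((actX g).obj x))
    -- weak right action (μ, β, b) on Y
    (actY : G → Y ⥤ Y)
    (β : ∀ g h : G, actY g ⋙ actY h ≅ actY (g * h))
    (b : 𝟭 Y ≅ actY 1)
    (hYassoc : ∀ (g h k : G) (y : Y),
      (actY k).map ((β g h).hom.app y) ≫ (β (g * h) k).hom.app y ≫
          eqToHom (by rw [mul_assoc]) =
        (β h k).hom.app ((actY g).obj y) ≫ (β g (h * k)).hom.app y)
    (hYunitl : ∀ (g : G) (y : Y),
      (actY g).map (b.hom.app y) ≫ (β 1 g).hom.app y ≫ eqToHom (by rw [one_mul]) =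
        𝟙 ((actY g).obj y))
    (hYunitr : ∀ (g : G) (y : Y),
      b.hom.app ((actY g).obj y) ≫ (β g 1).hom.app y ≫ eqToHom (by rw [mul_one]) =
        𝟙 ((actY g).obj y))
    -- G-equivariant functors (F, σ) and (H, τ)
    (F : X ⥤ Y) (σ : ∀ g : G, F ⋙ actY g ≅ actX g ⋙ F)
    (hσ1 : ∀ (g h : G) (x : X),
      (actY h).map ((σ g).hom.app x) ≫ (σ h).hom.app ((actX g).obj x) ≫
          F.map ((αX g h).hom.app x) =
        (β g h).hom.app (F.obj x) ≫ (σ (g * h)).hom.app x)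
    (hσ2 : ∀ x : X, F.map (aX.hom.app x) ≫ (σ 1).inv.app x = b.hom.app (F.obj x))
    (H : X ⥤ Y) (τ : ∀ g : G, H ⋙ actY g ≅ actX g ⋙ H)
    (hτ1 : ∀ (g h : G) (x : X),
      (actY h).map ((τ g).hom.app x) ≫ (τ h).hom.app ((actX g).obj x) ≫
          H.map ((αX g h).hom.app x) =
        (β g h).hom.app (H.obj x) ≫ (τ (g * h)).hom.app x)
    (hτ2 : ∀ x : X, H.map (aX.hom.app x) ≫ (τ 1).inv.app x = b.hom.app (H.obj x))
    -- a G-equivariant natural transformation Λ : F ⇒ H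
    (Λ : F ⟶ H)
    (hΛ : ∀ (g : G) (x : X),
      (actY g).map (Λ.app x) ≫ (τ g).hom.app x =
        (σ g).hom.app x ≫ Λ.app ((actX g).obj x)) :
    -- naturality of ⌊Λ⌋ : ⌊F⌋ ⇒ ⌊H⌋, where ⌊Λ⌋ˣ = (b^{H(x)} ∘ Λˣ, e):
    -- for every morphism (γ, g) : x → y in ⌊X/G⌋ we have
    -- ⌊Λ⌋ˣ ≫ ⌊H⌋(γ,g) = ⌊F⌋(γ,g) ≫ ⌊Λ⌋ʸ in ⌊Y/G⌋.
    ∀ (x y : X) (g : G) (γ : x ⟶ (actX g).obj y),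
      tcomp actY β
          (⟨1, Λ.app x ≫ b.hom.app (H.obj x)⟩ :
            Σ k : G, F.obj x ⟶ (actY k).obj (H.obj x))
          ⟨g, H.map γ ≫ (τ g).inv.app y⟩ =
        tcomp actY β
          (⟨g, F.map γ ≫ (σ g).inv.app y⟩ :
            Σ k : G, F.obj x ⟶ (actY k).obj (F.obj y))
          ⟨1, Λ.app y ≫ b.hom.app (H.obj y)⟩ := by
  intro x y g γ
  apply sigma_hom_ext actY (mul_one g) (one_mul g)
  simp only [tcomp, Functor.map_comp, Category.assoc]
  -- naturality of b moves it past H.map γ and (τ g).inv.app y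
  rw [← b.hom.naturality_assoc (H.map γ)]
  simp only [Functor.id_map]
  have h2 : b.hom.app (H.obj ((actX g).obj y)) ≫ (actY 1).map ((τ g).inv.app y) =
      (τ g).inv.app y ≫ b.hom.app ((actY g).obj (H.obj y)) := by
    simpa using (b.hom.naturality ((τ g).inv.app y)).symm
  rw [reassoc_of% h2]
  -- right unit axiom kills b ≫ β g 1 ≫ eqToHom
  rw [hYunitr g (H.obj y), Category.comp_id]
  -- RHS: left unit axiom kills (actY g).map b ≫ β 1 g ≫ eqToHom
  rw [hYunitl g (H.obj y), Category.comp_id]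
  -- use hΛ: (σ g).inv ≫ (actY g).map (Λ.app y) = Λ.app _ ≫ (τ g).inv
  have h1 : (σ g).inv.app y ≫ (actY g).map (Λ.app y) =
      Λ.app ((actX g).obj y) ≫ (τ g).inv.app y := by
    rw [← cancel_mono ((τ g).hom.app y)]
    simp [hΛ g y]
  rw [h1, ← Λ.naturality_assoc]
end
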